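/- Let X_1, …, X_n be random variables on a probability space such that the product ∏_{i ∈ T} X_i is integrable for every subset T of {1, …, n}. Then for every partition τ of {1, …, n} into nonempty blocks, ∏_{β ∈ τ} E[∏_{i ∈ β} X_i] = ∑_{π ⪯ τ} ∏_{β ∈ π} κ((X_i)_{i ∈ β}), where the sum ranges over all partitions π of {1, …, n} that refine τ (i.e., every block of π is contained in some block of τ). -/

import Mathlib

/-!
Expanding every cumulant on the right, a refinement of `τ` is the same as a choice of a partition
of each block of `τ`, so the right-hand side factors over the blocks and it suffices to prove the
moment–cumulant formula `m(t) = ∑_{ρ ⊢ t} ∏_{β ∈ ρ} κ(β)` for a single nonempty block `t`.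
Substituting the definition of `κ` and exchanging the sums, the coefficient of `∏_{p ∈ π} m(p)` is
`∑_{ρ ⪰ π} ∏_{β ∈ ρ} μ(#{p ∈ π | p ⊆ β})`, with `μ(k) = (-1)^(k-1) (k-1)!`. The partitions `ρ ⪰ π`
are the partitions of the set of blocks of `π`, and splitting off the block of a fixed element gives
the recursion `μ(k+2) + (k+1) μ(k+1) = 0`, which shows that this coefficient is `1` when `π` has one
block and `0` otherwise.
-/

open MeasureTheory
open scoped Classical

/-- The joint cumulant of the family of random variables `(X i)_{i ∈ s}`:
`κ((X i)_{i ∈ s}) = ∑_{σ ∈ P(s)} (-1)^(|σ|-1) (|σ|-1)! ∏_{γ ∈ σ} E[∏_{i ∈ γ} X i]`,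
where the sum is over all partitions `σ` of the finite index set `s`. -/
noncomputable def jointCumulant {Ω : Type*} [MeasureSpace Ω] {ι : Type*} [DecidableEq ι]
    (X : ι → Ω → ℝ) (s : Finset ι) : ℝ :=
  ∑ σ : Finpartition s,
    (-1 : ℝ) ^ (σ.parts.card - 1) * (Nat.factorial (σ.parts.card - 1)) *
      ∏ γ ∈ σ.parts, ∫ ω, ∏ i ∈ γ, X i ω

theorem Finpartition.parts_eq_singleton_of_card_le_one {α : Type*} [Lattice α] [OrderBot α]
    {a : α} (P : Finpartition a) (ha : a ≠ ⊥) (h : P.parts.card ≤ 1) : P.parts = {a} := by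
  obtain ⟨b, hb⟩ := Finset.card_eq_one.1 (le_antisymm h (Finset.card_pos.2 (P.parts_nonempty ha)))
  have hsup := P.sup_parts
  rw [hb, Finset.sup_singleton, id] at hsup
  rw [hb, hsup]

namespace Finpartition

variable {ι : Type*} [DecidableEq ι] {t : Finset ι}

theorem sup_filter_subset_of_le {π ρ : Finpartition t} (h : π ≤ ρ) {β : Finset ι}
    (hβ : β ∈ ρ.parts) : (π.parts.filter (· ⊆ β)).sup id = β := by
  refine le_antisymm (Finset.sup_le fun p hp => (Finset.mem_filter.1 hp).2) fun x hx => ?_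
  have hxt : x ∈ t := ρ.le hβ hx
  obtain ⟨β', hβ', hsub⟩ := h (π.part_mem.2 hxt)
  obtain rfl := ρ.eq_of_mem_parts hβ' hβ (hsub (π.mem_part hxt)) hx
  exact Finset.mem_sup.2 ⟨π.part x, Finset.mem_filter.2 ⟨π.part_mem.2 hxt, hsub⟩, π.mem_part hxt⟩

def restrictToPart {π ρ : Finpartition t} (h : π ≤ ρ) {β : Finset ι} (hβ : β ∈ ρ.parts) :
    Finpartition β :=
  π.ofSubset (Finset.filter_subset _ _) (sup_filter_subset_of_le h hβ)

theorem bind_le (ρ : Finpartition t) (Q : ∀ β ∈ ρ.parts, Finpartition β) : ρ.bind Q ≤ ρ := by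
  intro p hp
  obtain ⟨β, hβ, hp⟩ := mem_bind.1 hp
  exact ⟨β, hβ, (Q β hβ).le hp⟩

theorem filter_subset_bind_parts (ρ : Finpartition t) (Q : ∀ β ∈ ρ.parts, Finpartition β)
    {β : Finset ι} (hβ : β ∈ ρ.parts) : (ρ.bind Q).parts.filter (· ⊆ β) = (Q β hβ).parts := by
  ext p
  simp only [Finset.mem_filter, mem_bind]
  constructor
  · rintro ⟨⟨β', hβ', hp⟩, hpβ⟩
    obtain ⟨x, hx⟩ := (Q β' hβ').nonempty_of_mem_parts hp
    obtain rfl := ρ.eq_of_mem_parts hβ' hβ ((Q β' hβ').le hp hx) (hpβ hx)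
    exact hp
  · exact fun hp => ⟨⟨β, hβ, hp⟩, (Q β hβ).le hp⟩

theorem bind_restrictToPart {π ρ : Finpartition t} (h : π ≤ ρ) :
    ρ.bind (fun _ hβ => restrictToPart h hβ) = π := by
  ext p
  rw [mem_bind]
  constructor
  · rintro ⟨β, hβ, hp⟩
    exact (Finset.mem_filter.1 hp).1
  · intro hp
    obtain ⟨β, hβ, hpβ⟩ := h hp
    exact ⟨β, hβ, Finset.mem_filter.2 ⟨hp, hpβ⟩⟩

theorem prod_sum_eq_sum_refinements {R : Type*} [CommSemiring R] (ρ : Finpartition t)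
    (g : Finset ι → Finset (Finset ι) → R) :
    ∏ β ∈ ρ.parts, ∑ σ : Finpartition β, g β σ.parts =
      ∑ π ∈ Finset.univ.filter (· ≤ ρ), ∏ β ∈ ρ.parts, g β (π.parts.filter (· ⊆ β)) := by
  rw [Finset.prod_sum]
  symm
  refine Finset.sum_bij' (fun π hπ _ hβ => restrictToPart (Finset.mem_filter.1 hπ).2 hβ)
    (fun Q _ => ρ.bind Q) (fun _ _ => Finset.mem_pi.2 fun _ _ => Finset.mem_univ _)
    (fun Q _ => Finset.mem_filter.2 ⟨Finset.mem_univ _, bind_le ρ Q⟩)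
    (fun π hπ => bind_restrictToPart _) (fun Q _ => ?_) (fun π hπ => (Finset.prod_attach _ _).symm)
  funext β hβ
  exact Finpartition.ext (filter_subset_bind_parts ρ Q hβ)

theorem prod_prod_filter_subset_of_le {M : Type*} [CommMonoid M] {π ρ : Finpartition t}
    (h : π ≤ ρ) (f : Finset ι → M) :
    ∏ β ∈ ρ.parts, ∏ p ∈ π.parts.filter (· ⊆ β), f p = ∏ p ∈ π.parts, f p := by
  rw [← Finset.prod_biUnion]
  · congr 1
    ext p
    simp only [Finset.mem_biUnion, Finset.mem_filter]
    exact ⟨fun ⟨_, _, hp, _⟩ => hp, fun hp => (h hp).imp fun _ hβ => ⟨hβ.1, hp, hβ.2⟩⟩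
  · intro β₁ hβ₁ β₂ hβ₂ hne
    refine Finset.disjoint_left.2 fun p hp₁ hp₂ => hne ?_
    obtain ⟨hp, hpβ₁⟩ := Finset.mem_filter.1 hp₁
    obtain ⟨x, hx⟩ := π.nonempty_of_mem_parts hp
    exact ρ.eq_of_mem_parts hβ₁ hβ₂ (hpβ₁ hx) ((Finset.mem_filter.1 hp₂).2 hx)

theorem avoid_parts_of_mem (ρ : Finpartition t) {B : Finset ι} (hB : B ∈ ρ.parts) :
    (ρ.avoid B).parts = ρ.parts.erase B := by
  ext p
  rw [mem_avoid, Finset.mem_erase]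
  constructor
  · rintro ⟨d, hd, hdB, rfl⟩
    have hne : d ≠ B := by rintro rfl; exact hdB le_rfl
    have hdisj : Disjoint d B := ρ.disjoint hd hB hne
    rw [hdisj.sdiff_eq_left]
    exact ⟨hne, hd⟩
  · rintro ⟨hne, hp⟩
    have hdisj : Disjoint p B := ρ.disjoint hp hB hne
    exact ⟨p, hp, fun hle => ρ.ne_bot hp (hdisj.eq_bot_of_le hle), hdisj.sdiff_eq_left⟩

theorem sum_prod_parts_eq_sum_powerset_erase {R : Type*} [CommSemiring R] {a : ι} (ha : a ∈ t)
    (g : Finset ι → R) :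
    ∑ ρ : Finpartition t, ∏ β ∈ ρ.parts, g β =
      ∑ C ∈ (t.erase a).powerset,
        g (insert a C) * ∑ ρ : Finpartition (t \ insert a C), ∏ β ∈ ρ.parts, g β := by
  rw [← Finset.sum_fiberwise_of_maps_to (g := fun ρ : Finpartition t => (ρ.part a).erase a)
    fun ρ _ => Finset.mem_powerset.2 (Finset.erase_subset_erase a (ρ.part_subset a))]
  refine Finset.sum_congr rfl fun C hC => ?_
  have haC : a ∉ C := fun h => (Finset.mem_erase.1 (Finset.mem_powerset.1 hC h)).1 rfl
  have hBt : insert a C ⊆ t :=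
    Finset.insert_subset ha ((Finset.mem_powerset.1 hC).trans (Finset.erase_subset a t))
  have hpart : ∀ ρ ∈ Finset.univ.filter (fun ρ : Finpartition t => (ρ.part a).erase a = C),
      insert a C ∈ ρ.parts := fun ρ hρ => by
    rw [← (Finset.mem_filter.1 hρ).2, Finset.insert_erase (ρ.mem_part ha)]
    exact ρ.part_mem.2 ha
  rw [Finset.mul_sum]
  refine Finset.sum_bij' (fun ρ _ => ρ.avoid (insert a C))
    (fun ρ' _ => ρ'.extend (Finset.insert_nonempty a C).ne_empty Finset.sdiff_disjoint
      (Finset.sdiff_union_of_subset hBt))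
    (fun _ _ => Finset.mem_univ _) (fun ρ' _ => ?_) (fun ρ hρ => ?_) (fun ρ' _ => ?_)
    (fun ρ hρ => ?_)
  · refine Finset.mem_filter.2 ⟨Finset.mem_univ _, ?_⟩
    rw [part_eq_of_mem _ (Finset.mem_insert_self _ _) (Finset.mem_insert_self a C),
      Finset.erase_insert haC]
  · ext p
    rw [extend_parts, avoid_parts_of_mem ρ (hpart ρ hρ), Finset.insert_erase (hpart ρ hρ)]
  · ext p
    have hnot : insert a C ∉ ρ'.parts := fun h =>
      (Finset.mem_sdiff.1 (ρ'.le h (Finset.mem_insert_self a C))).2 (Finset.mem_insert_self a C)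
    rw [avoid_parts_of_mem _ (Finset.mem_insert_self _ _), extend_parts, Finset.erase_insert hnot]
  · rw [avoid_parts_of_mem ρ (hpart ρ hρ), Finset.mul_prod_erase _ _ (hpart ρ hρ)]

end Finpartition

/-- The value `μ(0̂, 1̂) = (-1)^(k-1) (k-1)!` of the Möbius function of the lattice of partitions
of a `k`-element set. -/
def cumulantCoeff (R : Type*) [Ring R] (k : ℕ) : R :=
  (-1) ^ (k - 1) * ((k - 1).factorial : R)

section cumulantCoeff

variable {R : Type*} [CommRing R]

theorem cumulantCoeff_one : cumulantCoeff R 1 = 1 := by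
  simp [cumulantCoeff]

theorem cumulantCoeff_add_two (k : ℕ) :
    cumulantCoeff R (k + 2) + (k + 1) * cumulantCoeff R (k + 1) = 0 := by
  simp only [cumulantCoeff, Nat.add_sub_cancel, show k + 2 - 1 = k + 1 from rfl,
    Nat.factorial_succ]
  push_cast
  ring

theorem sum_range_choose_mul_cumulantCoeff (N : ℕ) :
    ∑ k ∈ Finset.range (N + 1),
        N.choose k • (cumulantCoeff R (k + 1) * if N - k ≤ 1 then 1 else 0) =
      if N = 0 then 1 else 0 := by
  rcases N with _ | M
  · simp [cumulantCoeff_one]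
  rw [Finset.sum_range_succ, Finset.sum_range_succ,
    Finset.sum_eq_zero fun k hk => by rw [if_neg (by grind), mul_zero, smul_zero]]
  simp only [Nat.choose_self, Nat.choose_succ_self_right, if_pos (by omega : M + 1 - M ≤ 1),
    if_pos (by omega : M + 1 - (M + 1) ≤ 1), mul_one, one_smul, nsmul_eq_mul, zero_add,
    Nat.add_one_ne_zero, if_false]
  push_cast
  linear_combination cumulantCoeff_add_two (R := R) M

variable {ι : Type*} [DecidableEq ι]

theorem Finpartition.sum_prod_cumulantCoeff_card (t : Finset ι) :
    ∑ ρ : Finpartition t, ∏ β ∈ ρ.parts, cumulantCoeff R β.card =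
      if t.card ≤ 1 then 1 else 0 := by
  induction t using Finset.strongInduction with
  | _ t ih =>
  obtain rfl | ⟨a, ha⟩ := t.eq_empty_or_nonempty
  · have : Unique (Finpartition (∅ : Finset ι)) := inferInstanceAs (Unique (Finpartition ⊥))
    simp [parts_eq_empty_iff.2 rfl]
  have hsub : ∀ C ⊆ t.erase a, a ∉ C ∧ t \ insert a C = t.erase a \ C := fun C hC =>
    ⟨fun h => (Finset.mem_erase.1 (hC h)).1 rfl,
      by rw [Finset.sdiff_insert, Finset.erase_sdiff_comm]⟩
  calc _ = ∑ C ∈ (t.erase a).powerset,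
        cumulantCoeff R (C.card + 1) * if (t.erase a).card - C.card ≤ 1 then 1 else 0 := by
        rw [sum_prod_parts_eq_sum_powerset_erase ha]
        refine Finset.sum_congr rfl fun C hC => ?_
        obtain ⟨haC, hdiff⟩ := hsub C (Finset.mem_powerset.1 hC)
        rw [ih _ (hdiff ▸ (Finset.sdiff_subset.trans_ssubset (Finset.erase_ssubset ha))), hdiff,
          Finset.card_insert_of_notMem haC, Finset.card_sdiff_of_subset (Finset.mem_powerset.1 hC)]
    _ = if t.card ≤ 1 then 1 else 0 := by
        rw [Finset.sum_powerset_apply_card (fun k => cumulantCoeff R (k + 1) *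
          if (t.erase a).card - k ≤ 1 then 1 else 0), sum_range_choose_mul_cumulantCoeff,
          Finset.card_erase_of_mem ha]
        simp only [Nat.sub_eq_zero_iff_le]

end cumulantCoeff

namespace Finpartition

variable {ι : Type*} [DecidableEq ι] {t : Finset ι} (π : Finpartition t)

theorem filter_subset_sup_eq {κ : Finpartition π.parts} {b : Finset (Finset ι)}
    (hb : b ∈ κ.parts) : π.parts.filter (· ⊆ b.sup id) = b := by
  have hbπ : b ⊆ π.parts := κ.le hb
  ext p
  rw [Finset.mem_filter]
  refine ⟨fun ⟨hp, hpb⟩ => ?_, fun hp => ⟨hbπ hp, Finset.le_sup (f := id) hp⟩⟩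
  obtain ⟨x, hx⟩ := π.nonempty_of_mem_parts hp
  obtain ⟨q, hq, hxq⟩ := Finset.mem_sup.1 (hpb hx)
  rwa [π.eq_of_mem_parts hp (hbπ hq) hx hxq]

def coarsen (κ : Finpartition π.parts) : Finpartition t where
  parts := κ.parts.image (·.sup id)
  supIndep := by
    rw [Finset.supIndep_iff_pairwiseDisjoint]
    rintro _ hx _ hy hxy
    obtain ⟨b₁, hb₁, rfl⟩ := Finset.mem_image.1 (Finset.mem_coe.1 hx)
    obtain ⟨b₂, hb₂, rfl⟩ := Finset.mem_image.1 (Finset.mem_coe.1 hy)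
    have hd : Disjoint b₁ b₂ := κ.disjoint hb₁ hb₂ fun h => hxy (h ▸ rfl)
    refine Finset.disjoint_left.2 fun x hx₁ hx₂ => ?_
    obtain ⟨q₁, hq₁, hxq₁⟩ := Finset.mem_sup.1 hx₁
    obtain ⟨q₂, hq₂, hxq₂⟩ := Finset.mem_sup.1 hx₂
    obtain rfl := π.eq_of_mem_parts (κ.le hb₁ hq₁) (κ.le hb₂ hq₂) hxq₁ hxq₂
    exact Finset.disjoint_left.1 hd hq₁ hq₂
  sup_parts := by
    refine le_antisymm (Finset.sup_le fun x hx => ?_) fun x hx => ?_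
    · obtain ⟨b, hb, rfl⟩ := Finset.mem_image.1 hx
      exact Finset.sup_le fun p hp => π.le (κ.le hb hp)
    · obtain ⟨b, hb, hpb⟩ := κ.exists_mem (π.part_mem.2 hx)
      exact Finset.mem_sup.2 ⟨b.sup id, Finset.mem_image_of_mem _ hb,
        Finset.mem_sup.2 ⟨π.part x, hpb, π.mem_part hx⟩⟩
  bot_notMem h := by
    obtain ⟨b, hb, hsup⟩ := Finset.mem_image.1 h
    obtain ⟨p, hp⟩ := κ.nonempty_of_mem_parts hb
    exact π.ne_bot (κ.le hb hp) (le_bot_iff.1 (hsup ▸ Finset.le_sup (f := id) hp))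

theorem le_coarsen (κ : Finpartition π.parts) : π ≤ π.coarsen κ := by
  intro p hp
  obtain ⟨b, hb, hpb⟩ := κ.exists_mem hp
  exact ⟨b.sup id, Finset.mem_image_of_mem _ hb, Finset.le_sup (f := id) hpb⟩

def partsPartition {ρ : Finpartition t} (h : π ≤ ρ) : Finpartition π.parts where
  parts := ρ.parts.image fun β => π.parts.filter (· ⊆ β)
  supIndep := by
    rw [Finset.supIndep_iff_pairwiseDisjoint]
    rintro _ hx _ hy hxy
    obtain ⟨β₁, hβ₁, rfl⟩ := Finset.mem_image.1 (Finset.mem_coe.1 hx)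
    obtain ⟨β₂, hβ₂, rfl⟩ := Finset.mem_image.1 (Finset.mem_coe.1 hy)
    have hd : Disjoint β₁ β₂ := ρ.disjoint hβ₁ hβ₂ fun hh => hxy (hh ▸ rfl)
    refine Finset.disjoint_left.2 fun p hp₁ hp₂ => ?_
    obtain ⟨hp, hpβ₁⟩ := Finset.mem_filter.1 hp₁
    exact π.ne_bot hp (le_bot_iff.1 (hd hpβ₁ (Finset.mem_filter.1 hp₂).2))
  sup_parts := by
    refine le_antisymm (Finset.sup_le fun x hx => ?_) fun p hp => ?_
    · obtain ⟨β, -, rfl⟩ := Finset.mem_image.1 hx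
      exact Finset.filter_subset _ _
    · obtain ⟨β, hβ, hpβ⟩ := h hp
      exact Finset.mem_sup.2 ⟨_, Finset.mem_image_of_mem _ hβ, Finset.mem_filter.2 ⟨hp, hpβ⟩⟩
  bot_notMem hmem := by
    obtain ⟨β, hβ, hβπ⟩ := Finset.mem_image.1 hmem
    have hsup := sup_filter_subset_of_le h hβ
    rw [hβπ] at hsup
    exact ρ.ne_bot hβ hsup.symm

theorem coarsen_partsPartition {ρ : Finpartition t} (h : π ≤ ρ) :
    π.coarsen (π.partsPartition h) = ρ := by
  ext β
  simp only [coarsen, partsPartition, Finset.mem_image, exists_exists_and_eq_and]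
  constructor
  · rintro ⟨β', hβ', rfl⟩
    rwa [sup_filter_subset_of_le h hβ']
  · exact fun hβ => ⟨β, hβ, sup_filter_subset_of_le h hβ⟩

theorem partsPartition_coarsen (κ : Finpartition π.parts) :
    π.partsPartition (π.le_coarsen κ) = κ := by
  ext b
  simp only [coarsen, partsPartition, Finset.mem_image, exists_exists_and_eq_and]
  constructor
  · rintro ⟨b', hb', rfl⟩
    rwa [filter_subset_sup_eq π hb']
  · exact fun hb => ⟨b, hb, filter_subset_sup_eq π hb⟩

variable {R : Type*} [CommRing R]

theorem sum_coarsenings_prod_cumulantCoeff :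
    ∑ ρ ∈ Finset.univ.filter (π ≤ ·), ∏ β ∈ ρ.parts,
        cumulantCoeff R (π.parts.filter (· ⊆ β)).card =
      if π.parts.card ≤ 1 then 1 else 0 := by
  rw [← sum_prod_cumulantCoeff_card π.parts]
  refine Finset.sum_bij' (fun ρ hρ => π.partsPartition (Finset.mem_filter.1 hρ).2)
    (fun κ _ => π.coarsen κ) (fun _ _ => Finset.mem_univ _)
    (fun κ _ => Finset.mem_filter.2 ⟨Finset.mem_univ _, π.le_coarsen κ⟩)
    (fun ρ hρ => π.coarsen_partsPartition _) (fun κ _ => π.partsPartition_coarsen κ)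
    (fun ρ hρ => ?_)
  change _ = ∏ b ∈ ρ.parts.image _, _
  rw [Finset.prod_image]
  intro β₁ hβ₁ β₂ hβ₂ heq
  rw [← sup_filter_subset_of_le (Finset.mem_filter.1 hρ).2 hβ₁,
    ← sup_filter_subset_of_le (Finset.mem_filter.1 hρ).2 hβ₂]
  exact congrArg (·.sup id) heq

end Finpartition

section MomentCumulant

variable {ι : Type*} [DecidableEq ι] {R : Type*} [CommRing R]

/-- `jointCumulant X` is, definitionally, `cumulantOfMoments` of the moment function
`γ ↦ E[∏_{i ∈ γ} X i]`. -/
def cumulantOfMoments (m : Finset ι → R) (s : Finset ι) : R :=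
  ∑ σ : Finpartition s, cumulantCoeff R σ.parts.card * ∏ γ ∈ σ.parts, m γ

open Finpartition in
theorem sum_finpartition_prod_cumulantOfMoments {t : Finset ι} (ht : t.Nonempty)
    (m : Finset ι → R) :
    ∑ ρ : Finpartition t, ∏ β ∈ ρ.parts, cumulantOfMoments m β = m t := by
  calc ∑ ρ : Finpartition t, ∏ β ∈ ρ.parts, cumulantOfMoments m β
      = ∑ ρ : Finpartition t, ∑ π ∈ Finset.univ.filter (· ≤ ρ),
          (∏ β ∈ ρ.parts, cumulantCoeff R (π.parts.filter (· ⊆ β)).card) *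
            ∏ p ∈ π.parts, m p := by
        refine Finset.sum_congr rfl fun ρ _ => ?_
        unfold cumulantOfMoments
        rw [prod_sum_eq_sum_refinements ρ fun _ S => cumulantCoeff R S.card * ∏ γ ∈ S, m γ]
        refine Finset.sum_congr rfl fun π hπ => ?_
        rw [Finset.prod_mul_distrib, prod_prod_filter_subset_of_le (Finset.mem_filter.1 hπ).2]
    _ = ∑ π : Finpartition t, (∑ ρ ∈ Finset.univ.filter (π ≤ ·),
          ∏ β ∈ ρ.parts, cumulantCoeff R (π.parts.filter (· ⊆ β)).card) *
            ∏ p ∈ π.parts, m p := by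
        simp_rw [Finset.sum_mul]
        exact Finset.sum_comm' fun _ _ => by simp
    _ = ∑ π : Finpartition t, if π.parts.card ≤ 1 then ∏ p ∈ π.parts, m p else 0 := by
        simp_rw [sum_coarsenings_prod_cumulantCoeff, ite_mul, one_mul, zero_mul]
    _ = m t := by
        rw [Finset.sum_eq_single (indiscrete ht.ne_empty)]
        · simp [indiscrete]
        · intro π _ hne
          refine if_neg fun h => hne (Finpartition.ext ?_)
          exact π.parts_eq_singleton_of_card_le_one ht.ne_empty h
        · simp

end MomentCumulant

theorem prod_integral_eq_sum_refinements_prod_jointCumulant_general {Ω : Type*} [MeasureSpace Ω]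
    (n : ℕ) (X : Fin n → Ω → ℝ)
    (τ : Finpartition (Finset.univ : Finset (Fin n))) :
    (∏ β ∈ τ.parts, ∫ ω, ∏ i ∈ β, X i ω) =
      ∑ π ∈ Finset.univ.filter (fun π : Finpartition (Finset.univ : Finset (Fin n)) => π ≤ τ),
        ∏ β ∈ π.parts, jointCumulant X β := by
  calc (∏ β ∈ τ.parts, ∫ ω, ∏ i ∈ β, X i ω)
      = ∏ γ ∈ τ.parts, ∑ ρ : Finpartition γ, ∏ β ∈ ρ.parts, jointCumulant X β :=
        Finset.prod_congr rfl fun γ hγ =>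
          (sum_finpartition_prod_cumulantOfMoments (τ.nonempty_of_mem_parts hγ)
            fun β => ∫ ω, ∏ i ∈ β, X i ω).symm
    _ = ∑ π ∈ Finset.univ.filter (· ≤ τ), ∏ γ ∈ τ.parts,
          ∏ β ∈ π.parts.filter (· ⊆ γ), jointCumulant X β :=
        τ.prod_sum_eq_sum_refinements fun _ S => ∏ β ∈ S, jointCumulant X β
    _ = _ := Finset.sum_congr rfl fun π hπ =>
        Finpartition.prod_prod_filter_subset_of_le (Finset.mem_filter.1 hπ).2 _

/-- For every partition `τ` of `{1, …, n}`,
`∏_{β ∈ τ} E[∏_{i ∈ β} X i] = ∑_{π ⪯ τ} ∏_{β ∈ π} κ((X i)_{i ∈ β})`, where the sum is over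
all partitions `π` refining `τ` (every block of `π` is contained in some block of `τ`). -/
theorem prod_integral_eq_sum_refinements_prod_jointCumulant {Ω : Type*} [MeasureSpace Ω]
    [IsProbabilityMeasure (volume : Measure Ω)]
    (n : ℕ) (X : Fin n → Ω → ℝ)
    (hint : ∀ T : Finset (Fin n), Integrable (fun ω => ∏ i ∈ T, X i ω))
    (τ : Finpartition (Finset.univ : Finset (Fin n))) :
    (∏ β ∈ τ.parts, ∫ ω, ∏ i ∈ β, X i ω) =
      ∑ π ∈ Finset.univ.filter (fun π : Finpartition (Finset.univ : Finset (Fin n)) => π ≤ τ),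
        ∏ β ∈ π.parts, jointCumulant X β :=
  prod_integral_eq_sum_refinements_prod_jointCumulant_general n X τ
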